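/- Let R be a separate ranking function space, i.e., for every x ∈ X there exists r_x ∈ R with r_x(x) < r_x(x') for all x' ∈ X ∖ {x}, and let X be finite. Then OOD detection is learnable under AUC in the separate space 𝒟^s for R if and only if the AUC-based Realizability Assumption holds: for every domain D_XY ∈ 𝒟^s there exists r* ∈ R with AUC(r*; D_{X_I}, D_{X_O}) = 1. -/

import Mathlib

open MeasureTheory Filter Set
open scoped ENNReal NNReal

noncomputable section

namespace OODF

/-- A *domain*: a mixture `(1-π)·D_I + π·D_O` of an ID joint distribution `D_I` on
`𝒳 × {1,…,K}` and an OOD joint distribution `D_O` on `𝒳 × {K+1}`, with class prior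
`π ∈ [0,1)`.  Labels are encoded as naturals: ID labels are `{1,…,K}`, OOD label is `K+1`. -/
structure Domain (𝒳 : Type*) [MeasurableSpace 𝒳] (K : ℕ) where
  DI : Measure (𝒳 × ℕ)
  DO : Measure (𝒳 × ℕ)
  prior : ℝ
  probI : IsProbabilityMeasure DI
  probO : IsProbabilityMeasure DO
  suppI : DI {p | p.2 ∉ Set.Icc 1 K} = 0
  suppO : DO {p | p.2 ≠ K + 1} = 0
  prior_mem : prior ∈ Set.Ico (0 : ℝ) 1

variable {𝒳 : Type*} [MeasurableSpace 𝒳] {K : ℕ}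

namespace Domain

/-- the mixed joint distribution `D_XY = (1-π)·D_I + π·D_O` -/
def joint (D : Domain 𝒳 K) : Measure (𝒳 × ℕ) :=
  ENNReal.ofReal (1 - D.prior) • D.DI + ENNReal.ofReal D.prior • D.DO

/-- the marginal `D_{X_I}` of the ID joint distribution on the feature space -/
def margI (D : Domain 𝒳 K) : Measure 𝒳 := D.DI.map Prod.fst

/-- the marginal `D_{X_O}` of the OOD joint distribution on the feature space -/
def margO (D : Domain 𝒳 K) : Measure 𝒳 := D.DO.map Prod.fst

/-- the domain `D^α = (1-α)·D_I + α·D_O`, i.e. `D` with its class prior replaced by `α` -/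
def withPrior (D : Domain 𝒳 K) (α : Set.Ico (0 : ℝ) 1) : Domain 𝒳 K :=
  { D with prior := α.1, prior_mem := α.2 }

end Domain

/-- a prior-unknown domain space: closed under changing the class prior -/
def PriorUnknown (𝒟 : Set (Domain 𝒳 K)) : Prop :=
  ∀ D ∈ 𝒟, ∀ α : Set.Ico (0 : ℝ) 1, D.withPrior α ∈ 𝒟

/-- the risk `R_D(h)` w.r.t. the mixed joint distribution -/
def risk (ℓ : ℕ → ℕ → ℝ) (D : Domain 𝒳 K) (h : 𝒳 → ℕ) : ℝ :=
  ∫ p, ℓ (h p.1) p.2 ∂D.joint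

/-- the ID risk `R_D^in(h)` -/
def riskIn (ℓ : ℕ → ℕ → ℝ) (D : Domain 𝒳 K) (h : 𝒳 → ℕ) : ℝ :=
  ∫ p, ℓ (h p.1) p.2 ∂D.DI

/-- the OOD risk `R_D^out(h)` -/
def riskOut (ℓ : ℕ → ℕ → ℝ) (D : Domain 𝒳 K) (h : 𝒳 → ℕ) : ℝ :=
  ∫ p, ℓ (h p.1) (K + 1) ∂D.DO

/-- the `α`-risk `R_D^α(h) = (1-α)·R_D^in(h) + α·R_D^out(h)` -/
def riskA (ℓ : ℕ → ℕ → ℝ) (D : Domain 𝒳 K) (h : 𝒳 → ℕ) (α : ℝ) : ℝ :=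
  (1 - α) * riskIn ℓ D h + α * riskOut ℓ D h

/-- the distribution of an i.i.d. sample of size `n` from the ID joint distribution -/
def sampleMeasure (D : Domain 𝒳 K) (n : ℕ) : Measure (Fin n → 𝒳 × ℕ) :=
  letI := D.probI
  Measure.pi fun _ => D.DI

/-- An algorithm maps, for every sample size `n ≥ 1`, a labeled sample to a function on `𝒳`. -/
abbrev Algorithm (𝒳 β : Type*) := (n : ℕ) → (Fin n → 𝒳 × ℕ) → (𝒳 → β)

/-- `A` is consistent w.r.t. `𝒟` under risk with rate `ε`: it outputs hypotheses in `H`,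
the resulting risks are measurable in the sample, and the expected excess risk for samples
of size `n ≥ 1` is at most `ε n`. -/
def ConsistentRisk (ℓ : ℕ → ℕ → ℝ) (𝒟 : Set (Domain 𝒳 K)) (H : Set (𝒳 → ℕ))
    (A : Algorithm 𝒳 ℕ) (ε : ℕ → ℝ) : Prop :=
  (∀ n : ℕ, 1 ≤ n → ∀ S, A n S ∈ H) ∧
  (∀ D ∈ 𝒟, ∀ n : ℕ, 1 ≤ n → Measurable fun S : Fin n → 𝒳 × ℕ => risk ℓ D (A n S)) ∧
  ∀ D ∈ 𝒟, ∀ n : ℕ, 1 ≤ n →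
    ∫ S, (risk ℓ D (A n S) - ⨅ h : H, risk ℓ D h.1) ∂(sampleMeasure D n) ≤ ε n

/-- OOD detection is learnable under risk in `𝒟` for `H` with the given rate. -/
def LearnableRiskRate (ℓ : ℕ → ℕ → ℝ) (𝒟 : Set (Domain 𝒳 K)) (H : Set (𝒳 → ℕ))
    (ε : ℕ → ℝ) : Prop :=
  ∃ A, ConsistentRisk ℓ 𝒟 H A ε

/-- learnability of OOD detection under risk -/
def LearnableRisk (ℓ : ℕ → ℕ → ℝ) (𝒟 : Set (Domain 𝒳 K)) (H : Set (𝒳 → ℕ)) : Prop :=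
  ∃ ε : ℕ → ℝ, Antitone ε ∧ Tendsto ε atTop (nhds 0) ∧ LearnableRiskRate ℓ 𝒟 H ε

/-- `A` is strongly consistent: the expected excess `α`-risks are uniformly small over
all `α ∈ [0,1]`. -/
def StrongConsistentRisk (ℓ : ℕ → ℕ → ℝ) (𝒟 : Set (Domain 𝒳 K)) (H : Set (𝒳 → ℕ))
    (A : Algorithm 𝒳 ℕ) (ε : ℕ → ℝ) : Prop :=
  (∀ n : ℕ, 1 ≤ n → ∀ S, A n S ∈ H) ∧
  (∀ D ∈ 𝒟, ∀ n : ℕ, 1 ≤ n → ∀ α : ℝ,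
    Measurable fun S : Fin n → 𝒳 × ℕ => riskA ℓ D (A n S) α) ∧
  ∀ D ∈ 𝒟, ∀ n : ℕ, 1 ≤ n → ∀ α ∈ Set.Icc (0 : ℝ) 1,
    ∫ S, (riskA ℓ D (A n S) α - ⨅ h : H, riskA ℓ D h.1 α) ∂(sampleMeasure D n) ≤ ε n

/-- strong learnability of OOD detection under risk -/
def StrongLearnableRisk (ℓ : ℕ → ℕ → ℝ) (𝒟 : Set (Domain 𝒳 K)) (H : Set (𝒳 → ℕ)) : Prop :=
  ∃ ε : ℕ → ℝ, Antitone ε ∧ Tendsto ε atTop (nhds 0) ∧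
    ∃ A, StrongConsistentRisk ℓ 𝒟 H A ε

/-- the AUC of a ranking function `r` w.r.t. ID marginal `P` and OOD marginal `Q`:
`AUC(r) = E_{x ~ P} E_{x' ~ Q} [1_{r(x) > r(x')} + (1/2)·1_{r(x) = r(x')}]` -/
def AUC (r : 𝒳 → ℝ) (P Q : Measure 𝒳) : ℝ :=
  ∫ x, (∫ x', ((if r x' < r x then (1 : ℝ) else 0) +
      (1 / 2) * (if r x = r x' then (1 : ℝ) else 0)) ∂Q) ∂P

/-- `A` is AUC-consistent w.r.t. `𝒟` with rate `ε`. -/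
def ConsistentAUC (𝒟 : Set (Domain 𝒳 K)) (R : Set (𝒳 → ℝ))
    (A : Algorithm 𝒳 ℝ) (ε : ℕ → ℝ) : Prop :=
  (∀ n : ℕ, 1 ≤ n → ∀ S, A n S ∈ R) ∧
  (∀ D ∈ 𝒟, ∀ n : ℕ, 1 ≤ n →
    Measurable fun S : Fin n → 𝒳 × ℕ => AUC (A n S) D.margI D.margO) ∧
  ∀ D ∈ 𝒟, ∀ n : ℕ, 1 ≤ n →
    ∫ S, ((⨆ r : R, AUC r.1 D.margI D.margO) - AUC (A n S) D.margI D.margO)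
      ∂(sampleMeasure D n) ≤ ε n

/-- OOD detection is learnable under AUC in `𝒟` for `R` with the given rate. -/
def LearnableAUCRate (𝒟 : Set (Domain 𝒳 K)) (R : Set (𝒳 → ℝ)) (ε : ℕ → ℝ) : Prop :=
  ∃ A, ConsistentAUC 𝒟 R A ε

/-- learnability of OOD detection under AUC -/
def LearnableAUC (𝒟 : Set (Domain 𝒳 K)) (R : Set (𝒳 → ℝ)) : Prop :=
  ∃ ε : ℕ → ℝ, Antitone ε ∧ Tendsto ε atTop (nhds 0) ∧ LearnableAUCRate 𝒟 R ε

/-- the (topological) support of a measure -/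
def mSupport {α : Type*} [TopologicalSpace α] [MeasurableSpace α] (μ : Measure α) : Set α :=
  {x | ∀ U ∈ nhds x, 0 < μ U}

/-- the separate space `𝒟^s`: all domains whose ID and OOD marginals have disjoint supports -/
def separateSpace (𝒳 : Type*) [MeasurableSpace 𝒳] [TopologicalSpace 𝒳] (K : ℕ) :
    Set (Domain 𝒳 K) :=
  {D | mSupport D.margO ∩ mSupport D.margI = ∅}

/-- a class `G` of binary functions (encoded as predicates) shatters the finite set `C` -/
def Shatters {α : Type*} (G : Set (α → Prop)) (C : Finset α) : Prop :=
  ∀ f : α → Prop, ∃ g ∈ G, ∀ x ∈ C, g x ↔ f x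

/-- the VC dimension of a class of binary functions (encoded as predicates) -/
def VCdim {α : Type*} (G : Set (α → Prop)) : ℕ∞ :=
  sSup {n : ℕ∞ | ∃ C : Finset α, Shatters G C ∧ n = (C.card : ℕ∞)}

/-!
On a finite feature space, `AUC(r; P, Q) = 1` exactly when `r` ranks every atom of `P` strictly
above every atom of `Q`.

Realizability ⇒ learnability: given a sample, return a ranker of `R` that places the observed
features above all unobserved ones. It exists by realizability applied to the uniform
distributions on the observed set and on its complement (a domain of `𝒟^s`). Almost surely the
observed features carry no OOD mass, so the AUC deficit is at most the ID mass the sample misses,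
whose expectation `∑ₓ pₓ (1 - pₓ)ⁿ` is at most `|X| / (n + 1)`.

Learnability ⇒ realizability: replacing the OOD distribution by the point mass `δ_y` at an OOD
atom `y` stays in `𝒟^s`, and there the ranker of `R` minimal exactly at `y` has AUC `1`, so the
expected AUC deficit of the algorithm against `δ_y` is at most `ε(n)`. Since AUC is linear in the
OOD distribution, the same holds against `D_{X_O}`, whence `sup_R AUC ≥ 1 - ε(n) → 1`. On a finite
space AUC takes finitely many values, so the supremum is attained.
-/

section Ranking

variable {α : Type*}

def pairScore (r : α → ℝ) (x x' : α) : ℝ :=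
  (if r x' < r x then (1 : ℝ) else 0) + (1 / 2) * (if r x = r x' then (1 : ℝ) else 0)

lemma pairScore_nonneg (r : α → ℝ) (x x' : α) : 0 ≤ pairScore r x x' := by
  unfold pairScore; split_ifs <;> norm_num

lemma pairScore_le_one (r : α → ℝ) (x x' : α) : pairScore r x x' ≤ 1 := by
  unfold pairScore; split_ifs <;> norm_num; linarith

lemma pairScore_eq_one_iff {r : α → ℝ} {x x' : α} : pairScore r x x' = 1 ↔ r x' < r x := by
  unfold pairScore; split_ifs <;> norm_num <;> linarith

lemma pairScore_mem (r : α → ℝ) (x x' : α) : pairScore r x x' ∈ ({0, 1 / 2, 1} : Set ℝ) := by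
  unfold pairScore; split_ifs <;> norm_num; linarith

def SeparateRankingSpace (R : Set (α → ℝ)) : Prop :=
  ∀ x : α, ∃ r ∈ R, ∀ x' : α, x' ≠ x → r x < r x'

def RanksAbove (r : α → ℝ) (F : Set α) : Prop :=
  ∀ x ∈ F, ∀ y ∉ F, r y < r x

open Classical in
def separatingRanker (R : Set (α → ℝ)) (F : Set α) : α → ℝ :=
  if h : ∃ r ∈ R, RanksAbove r F then h.choose else Classical.epsilon (· ∈ R)

variable {R : Set (α → ℝ)}

lemma separatingRanker_mem (hR : R.Nonempty) (F : Set α) : separatingRanker R F ∈ R := by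
  unfold separatingRanker
  split_ifs with h
  · exact h.choose_spec.1
  · exact Classical.epsilon_spec hR

lemma ranksAbove_separatingRanker {F : Set α} (h : ∃ r ∈ R, RanksAbove r F) :
    RanksAbove (separatingRanker R F) F := by
  rw [separatingRanker, dif_pos h]
  exact h.choose_spec.2

end Ranking

section AUC

variable {α : Type*} [MeasurableSpace α]

lemma AUC_eq_integral_pairScore (r : α → ℝ) (P Q : Measure α) :
    AUC r P Q = ∫ x, ∫ x', pairScore r x x' ∂Q ∂P := rfl

lemma AUC_nonneg (r : α → ℝ) (P Q : Measure α) : 0 ≤ AUC r P Q :=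
  integral_nonneg fun _ => integral_nonneg fun _ => pairScore_nonneg _ _ _

lemma dirac_singleton_ne_zero_iff [MeasurableSingletonClass α] {a b : α} :
    Measure.dirac a {b} ≠ 0 ↔ b = a := by
  rw [Ne, dirac_eq_zero_iff_not_mem (measurableSet_singleton b), not_not, eq_comm,
    Set.mem_singleton_iff]

variable {r : α → ℝ} {P Q : Measure α} [IsProbabilityMeasure P] [IsProbabilityMeasure Q]

lemma AUC_le_one : AUC r P Q ≤ 1 := by
  have integral_le_one {μ : Measure α} [IsProbabilityMeasure μ] {f : α → ℝ} (hf : ∀ x, 0 ≤ f x)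
      (hf₁ : ∀ x, f x ≤ 1) : ∫ x, f x ∂μ ≤ 1 := by
    simpa using (Real.le_norm_self _).trans <| norm_integral_le_of_norm_le_const (μ := μ)
      (.of_forall fun x => (Real.norm_of_nonneg (hf x)).trans_le (hf₁ x))
  exact integral_le_one (fun _ => integral_nonneg fun _ => pairScore_nonneg _ _ _)
    fun _ => integral_le_one (pairScore_nonneg _ _) (pairScore_le_one _ _)

lemma le_iSup_AUC {R : Set (α → ℝ)} (hr : r ∈ R) : AUC r P Q ≤ ⨆ r' : R, AUC r'.1 P Q :=
  le_ciSup (f := fun r' : R => AUC r'.1 P Q) ⟨1, by rintro _ ⟨r', rfl⟩; exact AUC_le_one⟩ ⟨r, hr⟩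

lemma iSup_AUC_eq_one {R : Set (α → ℝ)} (hr : r ∈ R) (h : AUC r P Q = 1) :
    ⨆ r' : R, AUC r'.1 P Q = 1 :=
  have : Nonempty R := ⟨⟨r, hr⟩⟩
  le_antisymm (ciSup_le fun _ => AUC_le_one) (h ▸ le_iSup_AUC hr)

end AUC

section FintypeAUC

variable {α : Type*} [MeasurableSpace α] [MeasurableSingletonClass α] [Fintype α]

lemma sum_indicator_measureReal_singleton (μ : Measure α) [IsFiniteMeasure μ] (s : Set α) :
    ∑ x, s.indicator (fun x => μ.real {x}) x = μ.real s := by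
  classical
  simp only [Set.indicator_apply]
  rw [← Finset.sum_filter, sum_measureReal_singleton]
  simp

lemma AUC_eq_sum (r : α → ℝ) (P Q : Measure α) [IsFiniteMeasure P] [IsFiniteMeasure Q] :
    AUC r P Q = ∑ x, ∑ x', P.real {x} * Q.real {x'} * pairScore r x x' := by
  simp [AUC_eq_integral_pairScore, integral_fintype, Finset.mul_sum, mul_assoc]

lemma AUC_eq_sum_dirac (r : α → ℝ) (P Q : Measure α) [IsFiniteMeasure P] [IsFiniteMeasure Q] :
    AUC r P Q = ∑ y, Q.real {y} * AUC r P (Measure.dirac y) := by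
  simp only [AUC_eq_integral_pairScore, integral_dirac, ← integral_const_mul]
  rw [← integral_finsetSum _ fun _ _ => Integrable.of_finite]
  simp [integral_fintype]

lemma one_sub_AUC_eq_sum_dirac (r : α → ℝ) (P Q : Measure α) [IsFiniteMeasure P]
    [IsProbabilityMeasure Q] :
    1 - AUC r P Q = ∑ y, Q.real {y} * (1 - AUC r P (Measure.dirac y)) := by
  simp [AUC_eq_sum_dirac r P Q, mul_sub, Finset.sum_sub_distrib]

lemma finite_range_AUC (P Q : Measure α) [IsFiniteMeasure P] [IsFiniteMeasure Q] :
    (Set.range fun r : α → ℝ => AUC r P Q).Finite := by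
  refine ((Set.Finite.pi fun _ => Set.toFinite ({0, 1 / 2, 1} : Set ℝ)).image
    fun f : α × α → ℝ => ∑ x, ∑ x', P.real {x} * Q.real {x'} * f (x, x')).subset ?_
  rintro _ ⟨r, rfl⟩
  exact ⟨fun p => pairScore r p.1 p.2, fun p _ => pairScore_mem r p.1 p.2, (AUC_eq_sum r P Q).symm⟩

lemma one_sub_AUC_eq_sum (r : α → ℝ) (P Q : Measure α) [IsProbabilityMeasure P]
    [IsProbabilityMeasure Q] :
    1 - AUC r P Q = ∑ x, ∑ x', P.real {x} * Q.real {x'} * (1 - pairScore r x x') := by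
  have hP : ∑ x, P.real {x} = 1 := by simp
  have hQ : ∑ x, Q.real {x} = 1 := by simp
  simp only [mul_sub, mul_one, Finset.sum_sub_distrib, AUC_eq_sum, ← Finset.mul_sum, hQ, hP]

end FintypeAUC

section FiniteAUC

variable {α : Type*} [MeasurableSpace α] [MeasurableSingletonClass α] [Finite α]

lemma exists_AUC_eq_iSup (P Q : Measure α) [IsFiniteMeasure P] [IsFiniteMeasure Q]
    {R : Set (α → ℝ)} (hR : R.Nonempty) : ∃ r ∈ R, AUC r P Q = ⨆ r : R, AUC r.1 P Q := by
  cases nonempty_fintype α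
  have hfin : ((fun r => AUC r P Q) '' R).Finite :=
    (finite_range_AUC P Q).subset (Set.image_subset_range _ _)
  obtain ⟨r, hr, h⟩ := (hR.image _).csSup_mem hfin
  exact ⟨r, hr, h.trans (by rw [Set.image_eq_range]; rfl)⟩

variable {r : α → ℝ} {P Q : Measure α} [IsProbabilityMeasure P] [IsProbabilityMeasure Q]

lemma AUC_eq_one_iff : AUC r P Q = 1 ↔ ∀ x, P {x} ≠ 0 → ∀ y, Q {y} ≠ 0 → r y < r x := by
  cases nonempty_fintype α
  have hterm (x y : α) : 0 ≤ P.real {x} * Q.real {y} * (1 - pairScore r x y) :=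
    mul_nonneg (by positivity) (sub_nonneg.2 (pairScore_le_one r x y))
  rw [← sub_eq_zero, ← neg_eq_zero, neg_sub, one_sub_AUC_eq_sum,
    Finset.sum_eq_zero_iff_of_nonneg fun x _ => Finset.sum_nonneg fun y _ => hterm x y]
  simp only [Finset.mem_univ, forall_const,
    Finset.sum_eq_zero_iff_of_nonneg fun y _ => hterm _ y, mul_eq_zero, sub_eq_zero,
    eq_comm (a := (1 : ℝ)), pairScore_eq_one_iff]
  simp only [measureReal_def, ENNReal.toReal_eq_zero_iff, measure_ne_top, or_false]
  exact ⟨fun h x hx y hy => (h x y).resolve_left (not_or.2 ⟨hx, hy⟩),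
    fun h x y => or_iff_not_imp_left.2 fun hxy => h x (not_or.1 hxy).1 y (not_or.1 hxy).2⟩

lemma one_sub_AUC_le_of_ranksAbove {F : Set α} (h : RanksAbove r F) :
    1 - AUC r P Q ≤ P.real Fᶜ + Q.real F := by
  cases nonempty_fintype α
  have hterm (x y : α) : P.real {x} * Q.real {y} * (1 - pairScore r x y)
      ≤ Fᶜ.indicator (fun x => P.real {x}) x * Q.real {y}
        + P.real {x} * F.indicator (fun y => Q.real {y}) y := by
    have hle : P.real {x} * Q.real {y} * (1 - pairScore r x y) ≤ P.real {x} * Q.real {y} :=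
      mul_le_of_le_one_right (by positivity) (sub_le_self _ (pairScore_nonneg r x y))
    by_cases hx : x ∈ F <;> by_cases hy : y ∈ F
    · simpa [hx, hy] using hle
    · simp [hx, hy, pairScore_eq_one_iff.2 (h x hx y hy)]
    · simp only [hx, hy, Set.indicator_of_mem, Set.mem_compl_iff, not_false_eq_true]
      nlinarith [measureReal_nonneg (μ := P) (s := {x}), measureReal_nonneg (μ := Q) (s := {y})]
    · simpa [hx, hy] using hle
  have hP : ∑ x, P.real {x} = 1 := by simp
  have hQ : ∑ x, Q.real {x} = 1 := by simp
  calc 1 - AUC r P Q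
      ≤ ∑ x, ∑ y, (Fᶜ.indicator (fun x => P.real {x}) x * Q.real {y}
        + P.real {x} * F.indicator (fun y => Q.real {y}) y) := by
        rw [one_sub_AUC_eq_sum]; gcongr with x _ y _; exact hterm x y
    _ = P.real Fᶜ + Q.real F := by
        simp only [Finset.sum_add_distrib, ← Finset.mul_sum, ← Finset.sum_mul, hP, hQ,
          mul_one, one_mul, sum_indicator_measureReal_singleton]

lemma iSup_AUC_dirac_eq_one {R : Set (α → ℝ)} (hsepR : SeparateRankingSpace R) {y : α}
    (hy : P {y} = 0) : ⨆ r : R, AUC r.1 P (Measure.dirac y) = 1 := by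
  obtain ⟨r, hr, hmin⟩ := hsepR y
  refine iSup_AUC_eq_one hr (AUC_eq_one_iff.2 fun x hx y' hy' => ?_)
  obtain rfl := dirac_singleton_ne_zero_iff.1 hy'
  exact hmin x fun h => hx (h ▸ hy)

end FiniteAUC

section Domains

variable {α : Type*} [MeasurableSpace α] {K : ℕ}

namespace Domain

instance (D : Domain α K) : IsProbabilityMeasure D.margI :=
  have := D.probI; Measure.isProbabilityMeasure_map measurable_fst.aemeasurable

instance (D : Domain α K) : IsProbabilityMeasure D.margO :=
  have := D.probO; Measure.isProbabilityMeasure_map measurable_fst.aemeasurable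

instance (D : Domain α K) (n : ℕ) : IsProbabilityMeasure (sampleMeasure D n) := by
  have := D.probI; unfold sampleMeasure; infer_instance

lemma one_le (D : Domain α K) : 1 ≤ K := by
  have := D.probI
  by_contra hK
  have hall : {p : α × ℕ | p.2 ∉ Set.Icc 1 K} = Set.univ := by ext p; simp; omega
  have h := D.suppI
  rw [hall, measure_univ] at h
  exact one_ne_zero h

end Domain

lemma map_fst_map_pair (μ : Measure α) (c : ℕ) : (μ.map fun x => (x, c)).map Prod.fst = μ := by
  rw [Measure.map_map measurable_fst measurable_prodMk_right]
  exact Measure.map_id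

lemma map_pair_label_notMem (μ : Measure α) {c : ℕ} {s : Set ℕ} (hc : c ∈ s) :
    (μ.map fun x => (x, c)) {p | p.2 ∉ s} = 0 := by
  have hs : MeasurableSet {p : α × ℕ | p.2 ∉ s} := measurable_snd (.of_discrete (s := sᶜ))
  rw [Measure.map_apply measurable_prodMk_right hs]
  simp [hc]

namespace Domain

def ofMarginals (hK : 1 ≤ K) (P Q : Measure α) [IsProbabilityMeasure P]
    [IsProbabilityMeasure Q] : Domain α K where
  DI := P.map fun x => (x, 1)
  DO := Q.map fun x => (x, K + 1)
  prior := 0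
  probI := Measure.isProbabilityMeasure_map measurable_prodMk_right.aemeasurable
  probO := Measure.isProbabilityMeasure_map measurable_prodMk_right.aemeasurable
  suppI := map_pair_label_notMem P ⟨le_rfl, hK⟩
  suppO := map_pair_label_notMem Q (s := {K + 1}) rfl
  prior_mem := ⟨le_rfl, zero_lt_one⟩

def withOOD (D : Domain α K) (Q : Measure α) [IsProbabilityMeasure Q] : Domain α K :=
  { D with
    DO := Q.map fun x => (x, K + 1)
    probO := Measure.isProbabilityMeasure_map measurable_prodMk_right.aemeasurable
    suppO := map_pair_label_notMem Q (s := {K + 1}) rfl }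

variable (P Q : Measure α) [IsProbabilityMeasure P] [IsProbabilityMeasure Q]

@[simp] lemma margI_ofMarginals (hK : 1 ≤ K) : (ofMarginals hK P Q).margI = P :=
  map_fst_map_pair P 1

@[simp] lemma margO_ofMarginals (hK : 1 ≤ K) : (ofMarginals hK P Q).margO = Q :=
  map_fst_map_pair Q (K + 1)

@[simp] lemma margI_withOOD (D : Domain α K) : (D.withOOD Q).margI = D.margI := rfl

@[simp] lemma margO_withOOD (D : Domain α K) : (D.withOOD Q).margO = Q :=
  map_fst_map_pair Q (K + 1)

@[simp] lemma sampleMeasure_withOOD (D : Domain α K) (n : ℕ) :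
    sampleMeasure (D.withOOD Q) n = sampleMeasure D n := rfl

end Domain

variable [TopologicalSpace α] [DiscreteTopology α]

lemma mSupport_eq_setOf (μ : Measure α) : mSupport μ = {x | μ {x} ≠ 0} := by
  ext x
  refine ⟨fun h => (h {x} (by simp)).ne', fun h U hU => ?_⟩
  exact (pos_iff_ne_zero.2 h).trans_le (measure_mono (by simpa using mem_of_mem_nhds hU))

lemma mem_separateSpace_iff {D : Domain α K} :
    D ∈ separateSpace α K ↔ ∀ x, D.margO {x} ≠ 0 → D.margI {x} = 0 := by
  simp [separateSpace, mSupport_eq_setOf, Set.eq_empty_iff_forall_notMem]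

end Domains

section MissingMass

variable {α : Type*} [MeasurableSpace α] [MeasurableSingletonClass α] [Fintype α]

lemma mul_one_sub_pow_le_one_div {p : ℝ} (hp₀ : 0 ≤ p) (hp₁ : p ≤ 1) (n : ℕ) :
    p * (1 - p) ^ n ≤ 1 / (n + 1) := by
  have hq : 0 ≤ (1 - p) ^ n := pow_nonneg (sub_nonneg.2 hp₁) n
  rw [le_div_iff₀ (by positivity)]
  calc p * (1 - p) ^ n * (n + 1) ≤ (1 + n * p) * (1 - p) ^ n := by nlinarith
    _ ≤ (1 + p) ^ n * (1 - p) ^ n :=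
        mul_le_mul_of_nonneg_right (one_add_mul_le_pow (by linarith) n) hq
    _ = (1 - p ^ 2) ^ n := by rw [← mul_pow]; ring
    _ ≤ 1 := pow_le_one₀ (by nlinarith) (by nlinarith)

lemma integral_measureReal_compl_range_le (μ : Measure α) [IsProbabilityMeasure μ] (n : ℕ) :
    ∫ T, μ.real (Set.range T)ᶜ ∂(Measure.pi fun _ : Fin n => μ) ≤ Fintype.card α / (n + 1) := by
  have hmiss (x : α) :
      (Measure.pi fun _ : Fin n => μ).real {T | x ∉ Set.range T} = (1 - μ.real {x}) ^ n := by
    have : {T : Fin n → α | x ∉ Set.range T} = Set.univ.pi fun _ => {x}ᶜ := by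
      ext T; simp [eq_comm]
    rw [this, measureReal_def, Measure.pi_pi, ENNReal.toReal_prod]
    simp [← measureReal_def, probReal_compl_eq_one_sub]
  calc ∫ T, μ.real (Set.range T)ᶜ ∂(Measure.pi fun _ : Fin n => μ)
      = ∫ T, ∑ x, {T : Fin n → α | x ∉ Set.range T}.indicator (fun _ => μ.real {x}) T
          ∂(Measure.pi fun _ : Fin n => μ) := by
        congr with T
        rw [← sum_indicator_measureReal_singleton]
        rfl
    _ = ∑ x, μ.real {x} * (1 - μ.real {x}) ^ n := by
        rw [integral_finsetSum _ fun _ _ => Integrable.of_finite]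
        simp only [integral_indicator_const _ (MeasurableSet.of_discrete), hmiss, smul_eq_mul,
          mul_comm]
    _ ≤ ∑ _x : α, 1 / ((n : ℝ) + 1) := by
        gcongr with x
        exact mul_one_sub_pow_le_one_div measureReal_nonneg measureReal_le_one n
    _ = Fintype.card α / (n + 1) := by simp [div_eq_mul_inv]

end MissingMass

section Learnability

variable {α : Type*} [MeasurableSpace α] {K : ℕ}

def AUCRealizable (𝒟 : Set (Domain α K)) (R : Set (α → ℝ)) : Prop :=
  ∀ D ∈ 𝒟, ∃ r ∈ R, AUC r D.margI D.margO = 1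

variable [MeasurableSingletonClass α] [Finite α] [TopologicalSpace α] [DiscreteTopology α]
  {R : Set (α → ℝ)}

lemma integral_one_sub_AUC_dirac_le {A : Algorithm α ℝ} {ε : ℕ → ℝ}
    (hA : ConsistentAUC (separateSpace α K) R A ε) (hsepR : SeparateRankingSpace R)
    {D : Domain α K} (hD : D ∈ separateSpace α K) {y : α} (hy : D.margO {y} ≠ 0)
    {n : ℕ} (hn : 1 ≤ n) :
    ∫ S, (1 - AUC (A n S) D.margI (Measure.dirac y)) ∂(sampleMeasure D n) ≤ ε n := by
  have hPy := mem_separateSpace_iff.1 hD y hy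
  have hDy : D.withOOD (Measure.dirac y) ∈ separateSpace α K :=
    mem_separateSpace_iff.2 fun x hx => by
      obtain rfl : y = x := by simpa using hx
      simpa using hPy
  simpa [iSup_AUC_dirac_eq_one hsepR hPy] using hA.2.2 _ hDy n hn

lemma one_sub_le_iSup_AUC {A : Algorithm α ℝ} {ε : ℕ → ℝ}
    (hA : ConsistentAUC (separateSpace α K) R A ε) (hsepR : SeparateRankingSpace R)
    {D : Domain α K} (hD : D ∈ separateSpace α K) {n : ℕ} (hn : 1 ≤ n) :
    1 - ε n ≤ ⨆ r : R, AUC r.1 D.margI D.margO := by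
  cases nonempty_fintype α
  have hint (Q : Measure α) [IsProbabilityMeasure Q] :
      Integrable (fun S => 1 - AUC (A n S) D.margI Q) (sampleMeasure D n) :=
    .of_bound (measurable_of_countable _).aestronglyMeasurable 1 <| .of_forall fun S => by
      rw [Real.norm_of_nonneg (sub_nonneg.2 AUC_le_one)]
      linarith [AUC_nonneg (A n S) D.margI Q]
  have hbound : 1 - ⨆ r : R, AUC r.1 D.margI D.margO
      ≤ ∫ S, (1 - AUC (A n S) D.margI D.margO) ∂(sampleMeasure D n) := by
    simpa using integral_mono (integrable_const _) (hint D.margO)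
      fun S => sub_le_sub_left (le_iSup_AUC (hA.1 n hn S)) 1
  have hdecomp : ∫ S, (1 - AUC (A n S) D.margI D.margO) ∂(sampleMeasure D n)
      = ∑ y, D.margO.real {y}
          * ∫ S, (1 - AUC (A n S) D.margI (Measure.dirac y)) ∂(sampleMeasure D n) := by
    simp_rw [one_sub_AUC_eq_sum_dirac _ D.margI D.margO]
    rw [integral_finsetSum _ fun y _ => (hint _).const_mul _]
    simp_rw [integral_const_mul]
  have hsum : ∑ y, D.margO.real {y}
      * ∫ S, (1 - AUC (A n S) D.margI (Measure.dirac y)) ∂(sampleMeasure D n) ≤ ε n := by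
    calc _ ≤ ∑ y, D.margO.real {y} * ε n := by
          refine Finset.sum_le_sum fun y _ => ?_
          by_cases hy : D.margO {y} = 0
          · simp [measureReal_def, hy]
          · exact mul_le_mul_of_nonneg_left
              (integral_one_sub_AUC_dirac_le hA hsepR hD hy hn) measureReal_nonneg
      _ = ε n := by simp [← Finset.sum_mul]
  linarith

theorem realizable_of_learnableAUC (hsepR : SeparateRankingSpace R)
    (hL : LearnableAUC (separateSpace α K) R) : AUCRealizable (separateSpace α K) R := by
  obtain ⟨ε, -, hε, A, hA⟩ := hL
  intro D hD
  obtain ⟨x⟩ := nonempty_of_isProbabilityMeasure D.margI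
  obtain ⟨r₀, hr₀, -⟩ := hsepR x
  obtain ⟨r, hr, hr_max⟩ := exists_AUC_eq_iSup D.margI D.margO ⟨r₀, hr₀⟩
  have hlim : Tendsto (fun n => 1 - ε n) atTop (nhds 1) := by simpa using hε.const_sub 1
  refine ⟨r, hr, le_antisymm AUC_le_one ?_⟩
  rw [hr_max]
  exact le_of_tendsto hlim <| by
    filter_upwards [eventually_ge_atTop 1] with n hn using one_sub_le_iSup_AUC hA hsepR hD hn

open ProbabilityTheory in
lemma exists_ranksAbove_of_realizable (hK : 1 ≤ K) (hreal : AUCRealizable (separateSpace α K) R)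
    {F : Set α} (hF : F.Nonempty) (hFc : Fᶜ.Nonempty) : ∃ r ∈ R, RanksAbove r F := by
  have := isProbabilityMeasure_uniformOn F.toFinite hF
  have := isProbabilityMeasure_uniformOn Fᶜ.toFinite hFc
  have hpos (s : Set α) (x : α) : uniformOn s {x} ≠ 0 ↔ x ∈ s := by
    rw [Ne, uniformOn_eq_zero_iff s.toFinite, Set.inter_singleton_eq_empty, not_not]
  obtain ⟨r, hr, hAUC⟩ := hreal (.ofMarginals hK (uniformOn F) (uniformOn Fᶜ)) <|
    mem_separateSpace_iff.2 fun x hx => by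
      simp only [Domain.margI_ofMarginals, Domain.margO_ofMarginals] at hx ⊢
      exact not_not.1 fun h => (hpos Fᶜ x).1 hx ((hpos F x).1 h)
  simp only [Domain.margI_ofMarginals, Domain.margO_ofMarginals, AUC_eq_one_iff, hpos] at hAUC
  exact ⟨r, hr, hAUC⟩

lemma one_sub_AUC_separatingRanker_le (hreal : AUCRealizable (separateSpace α K) R)
    {D : Domain α K} (hD : D ∈ separateSpace α K) {n : ℕ} (hn : 1 ≤ n) (T : Fin n → α)
    (hT : ∀ i, D.margI {T i} ≠ 0) :
    1 - AUC (separatingRanker R (Set.range T)) D.margI D.margO ≤ D.margI.real (Set.range T)ᶜ := by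
  have hQT : D.margO (Set.range T) = 0 := by
    rw [← Set.iUnion_singleton_eq_range]
    exact measure_iUnion_null fun i => not_not.1 fun h => hT i (mem_separateSpace_iff.1 hD _ h)
  have hT_ne : (Set.range T).Nonempty := ⟨T ⟨0, hn⟩, Set.mem_range_self _⟩
  have hTc_ne : (Set.range T)ᶜ.Nonempty := Set.nonempty_compl.2 fun h => by simp [h] at hQT
  have hranks := ranksAbove_separatingRanker
    (exists_ranksAbove_of_realizable D.one_le hreal hT_ne hTc_ne)
  simpa [measureReal_def, hQT] using one_sub_AUC_le_of_ranksAbove hranks (P := D.margI) (Q := D.margO)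

lemma integral_one_sub_AUC_separatingRanker_le (hreal : AUCRealizable (separateSpace α K) R)
    {D : Domain α K} (hD : D ∈ separateSpace α K) {n : ℕ} (hn : 1 ≤ n) :
    ∫ S, (1 - AUC (separatingRanker R (Set.range fun i => (S i).1)) D.margI D.margO)
      ∂(sampleMeasure D n) ≤ Nat.card α / (n + 1) := by
  cases nonempty_fintype α
  have hmap : (sampleMeasure D n).map (fun S i => (S i).1) = Measure.pi fun _ => D.margI :=
    Measure.pi_map_pi (hμ := fun _ => inferInstanceAs (SigmaFinite D.margI))
      fun _ => measurable_fst.aemeasurable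
  have hφ : Measurable fun (S : Fin n → α × ℕ) i => (S i).1 := by fun_prop
  calc _ = ∫ T, (1 - AUC (separatingRanker R (Set.range T)) D.margI D.margO)
        ∂(Measure.pi fun _ : Fin n => D.margI) := by
        rw [← hmap, integral_map hφ.aemeasurable (measurable_of_finite _).aestronglyMeasurable]
    _ ≤ ∫ T, D.margI.real (Set.range T)ᶜ ∂(Measure.pi fun _ : Fin n => D.margI) := by
        refine integral_mono_ae .of_finite .of_finite <| ae_iff_of_countable.2 fun T hT =>
          one_sub_AUC_separatingRanker_le hreal hD hn T fun i => ?_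
        simp only [Measure.pi_singleton, ne_eq, Finset.prod_eq_zero_iff, not_exists] at hT
        simpa using hT i
    _ ≤ Nat.card α / (n + 1) := by
        simpa using integral_measureReal_compl_range_le D.margI n

theorem learnableAUC_of_realizable (hsepR : SeparateRankingSpace R)
    (hreal : AUCRealizable (separateSpace α K) R) : LearnableAUC (separateSpace α K) R := by
  refine ⟨fun n => Nat.card α / (n + 1), fun m n hmn => by dsimp only; gcongr, ?_,
    fun n S => separatingRanker R (Set.range fun i => (S i).1),
    fun n hn S => separatingRanker_mem ?_ _, fun D _ n _ => measurable_of_countable _,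
    fun D hD n hn => ?_⟩
  · simpa [Function.comp_def] using (tendsto_const_div_atTop_nhds_zero_nat (Nat.card α : ℝ)).comp
      (tendsto_add_atTop_nat 1)
  · obtain ⟨r, hr, -⟩ := hsepR (S ⟨0, hn⟩).1
    exact ⟨r, hr⟩
  · obtain ⟨r, hr, hAUC⟩ := hreal D hD
    rw [iSup_AUC_eq_one hr hAUC]
    exact integral_one_sub_AUC_separatingRanker_le hreal hD hn

end Learnability

theorem stmt13_general {d K : ℕ} (X : Set (EuclideanSpace ℝ (Fin d))) [Finite ↥X]
    (R : Set (↥X → ℝ))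
    (hsepR : ∀ x : ↥X, ∃ r ∈ R, ∀ x' : ↥X, x' ≠ x → r x < r x') :
    LearnableAUC (separateSpace ↥X K) R ↔
      ∀ D ∈ separateSpace ↥X K, ∃ r ∈ R, AUC r D.margI D.margO = 1 :=
  ⟨realizable_of_learnableAUC hsepR, learnableAUC_of_realizable hsepR⟩

/-- Theorem 11 / `T13_auc` of the paper.  Let `R` be a separate ranking
function space and `X` finite.  Then OOD detection is learnable under AUC in the separate
space `𝒟^s` for `R` iff the AUC-based Realizability Assumption holds: every domain in
`𝒟^s` admits a ranking function in `R` with AUC equal to `1`. -/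
theorem stmt13 {d K : ℕ} (X : Set (EuclideanSpace ℝ (Fin d))) [Finite ↥X]
    (R : Set (↥X → ℝ)) (hR : ∀ r ∈ R, Measurable r)
    (hsepR : ∀ x : ↥X, ∃ r ∈ R, ∀ x' : ↥X, x' ≠ x → r x < r x') :
    LearnableAUC (separateSpace ↥X K) R ↔
      ∀ D ∈ separateSpace ↥X K, ∃ r ∈ R, AUC r D.margI D.margO = 1 :=
  stmt13_general X R hsepR

end OODF

end
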